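/- Consider the two-node interaction system with action spaces A_1 = A_2 = {x, y}, where node 2's reaction function is historyless and always outputs node 1's most recent action, and node 1's reaction function at each time t outputs y if at some point in the history of interaction node 2's action changed from x to y (i.e., there exist two consecutive profiles in the history at which node 2's action was x and then y), and outputs x otherwise. Then this system is convergent: for every initial history and every fair schedule the dynamics is eventually constant, and it converges to one of the two stable states (x,x) or (y,y). -/

import Mathlib

/-- A schedule `σ` is fair if every node is activated infinitely often. -/
def Fair {n : ℕ} (σ : ℕ → Finset (Fin n)) : Prop :=
  ∀ i : Fin n, ∀ N : ℕ, ∃ t, N ≤ t ∧ i ∈ σ t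

/-- A schedule is `r`-fair if every node is activated at least once in every
`r` consecutive time steps. -/
def RFair {n : ℕ} (r : ℕ) (σ : ℕ → Finset (Fin n)) : Prop :=
  ∀ i : Fin n, ∀ t0 : ℕ, ∃ t, t0 ≤ t ∧ t < t0 + r ∧ i ∈ σ t

/-- A (deterministic, historyless) reaction function is self-independent if
it does not depend on node `i`'s own action. -/
def SelfIndependent {n : ℕ} {A : Fin n → Type*} (i : Fin n)
    (g : (∀ j, A j) → A i) : Prop :=
  ∀ a b : ∀ j, A j, (∀ j, j ≠ i → a j = b j) → g a = g b

/-- A stable state is a fixed point of all reaction functions. -/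
def Stable {n : ℕ} {A : Fin n → Type*}
    (g : ∀ i : Fin n, (∀ j, A j) → A i) (a : ∀ j, A j) : Prop :=
  ∀ i, g i a = a i

/-- The `(s0, σ)`-dynamics of a system of deterministic historyless reaction
functions: at each time step, each activated node reacts to the current
profile and the other nodes repeat their previous action. -/
def dynamics {n : ℕ} {A : Fin n → Type*}
    (g : ∀ i : Fin n, (∀ j, A j) → A i) (s0 : ∀ j, A j)
    (σ : ℕ → Finset (Fin n)) : ℕ → ∀ j, A j
  | 0 => s0
  | t + 1 => fun i =>
      if i ∈ σ (t + 1) then g i (dynamics g s0 σ t) else dynamics g s0 σ t i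

/-- A sequence converges if it is eventually constant. -/
def EventuallyConstant {α : Type*} (s : ℕ → α) : Prop :=
  ∃ t0 : ℕ, ∀ t, t0 ≤ t → s t = s t0

/-- The system is convergent if the dynamics converges for every initial
profile and every fair schedule. -/
def Convergent {n : ℕ} {A : Fin n → Type*}
    (g : ∀ i : Fin n, (∀ j, A j) → A i) : Prop :=
  ∀ (s0 : ∀ j, A j) (σ : ℕ → Finset (Fin n)),
    (∀ t, (σ t).Nonempty) → Fair σ → EventuallyConstant (dynamics g s0 σ)

/-- The system is `r`-convergent if the dynamics converges for every initial
profile and every `r`-fair schedule. -/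
def RConvergent {n : ℕ} {A : Fin n → Type*} (r : ℕ)
    (g : ∀ i : Fin n, (∀ j, A j) → A i) : Prop :=
  ∀ (s0 : ∀ j, A j) (σ : ℕ → Finset (Fin n)),
    (∀ t, (σ t).Nonempty) → RFair r σ → EventuallyConstant (dynamics g s0 σ)

/-- The two actions `x` and `y`. -/
inductive XY : Type
  | x : XY
  | y : XY
deriving DecidableEq

theorem Fair.eventually_eq_of_activation {n : ℕ} {σ : ℕ → Finset (Fin n)} (hfair : Fair σ)
    {α : Type*} {f : ℕ → α} {i : Fin n} {a : α} {T : ℕ}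
    (hact : ∀ t, T ≤ t → i ∈ σ t → f t = a)
    (hidle : ∀ t, T ≤ t → i ∉ σ (t + 1) → f (t + 1) = f t) :
    ∃ t₁, T ≤ t₁ ∧ ∀ t, t₁ ≤ t → f t = a := by
  obtain ⟨t₁, hT, hi⟩ := hfair i T
  refine ⟨t₁, hT, fun t ht => ?_⟩
  induction t, ht using Nat.le_induction with
  | base => exact hact t₁ hT hi
  | succ t ht ih =>
    by_cases hi' : i ∈ σ (t + 1)
    · exact hact (t + 1) (by omega) hi'
    · rw [hidle t (by omega) hi', ih]

/-- Node 1 of the paper is index `0`, node 2 is index `1`, and `s 0, …, s (w-1)` is the initial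
history. -/
theorem unbounded_recall_system_convergent_general
    (w : ℕ) (s : ℕ → Fin 2 → XY)
    (σ : ℕ → Finset (Fin 2)) (hfair : Fair σ)
    (hdyn : ∀ t : ℕ, w ≤ t →
      ((1 : Fin 2) ∈ σ t → s t 1 = s (t - 1) 0) ∧
      ((1 : Fin 2) ∉ σ t → s t 1 = s (t - 1) 1) ∧
      ((0 : Fin 2) ∈ σ t →
        ((∃ u : ℕ, u + 1 < t ∧ s u 1 = XY.x ∧ s (u + 1) 1 = XY.y) →
            s t 0 = XY.y) ∧
        (¬ (∃ u : ℕ, u + 1 < t ∧ s u 1 = XY.x ∧ s (u + 1) 1 = XY.y) →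
            s t 0 = XY.x)) ∧
      ((0 : Fin 2) ∉ σ t → s t 0 = s (t - 1) 0)) :
    ∃ t0 : ℕ, (∀ t, t0 ≤ t → s t = s t0) ∧
      ((s t0 = fun _ => XY.x) ∨ (s t0 = fun _ => XY.y)) := by
  -- Whether node 2 ever switches from `x` to `y` is settled at a finite time, after which node 1
  -- always reacts with the same action `a`.
  obtain ⟨a, T, hwT, hreact₀⟩ : ∃ a T, w ≤ T ∧ ∀ t, T ≤ t → (0 : Fin 2) ∈ σ t → s t 0 = a := by
    by_cases hswitch : ∃ u, s u 1 = XY.x ∧ s (u + 1) 1 = XY.y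
    · obtain ⟨u, hx, hy⟩ := hswitch
      exact ⟨XY.y, max w (u + 2), le_max_left _ _, fun t ht h0 =>
        ((hdyn t (by omega)).2.2.1 h0).1 ⟨u, by omega, hx, hy⟩⟩
    · exact ⟨XY.x, w, le_rfl, fun t ht h0 =>
        ((hdyn t ht).2.2.1 h0).2 fun ⟨u, _, hx, hy⟩ => hswitch ⟨u, hx, hy⟩⟩
  obtain ⟨t₁, hTt₁, h₀⟩ := hfair.eventually_eq_of_activation hreact₀
    fun t ht h0 => by simpa using (hdyn (t + 1) (by omega)).2.2.2 h0
  obtain ⟨t₂, ht₁t₂, h₁⟩ := hfair.eventually_eq_of_activation (i := 1) (T := t₁ + 1)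
    (fun t ht h1 => ((hdyn t (by omega)).1 h1).trans (h₀ (t - 1) (by omega)))
    fun t ht h1 => by simpa using (hdyn (t + 1) (by omega)).2.1 h1
  have hconst : ∀ t, t₂ ≤ t → s t = fun _ => a := fun t ht =>
    funext fun i => by fin_cases i; exacts [h₀ t (by omega), h₁ t ht]
  refine ⟨t₂, fun t ht => (hconst t ht).trans (hconst t₂ le_rfl).symm, ?_⟩
  rw [hconst t₂ le_rfl]
  cases a <;> simp

/-- The two-node system in which node 2 (index 1) always
copies node 1's most recent action, and node 1 (index 0) chooses `y` iff node
2's action changed from `x` to `y` at some point in the history, is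
convergent, and it converges to `(x,x)` or `(y,y)`.  Here `s 0, …, s (w-1)`
is the initial history and at every time step `t ≥ w` each activated node
reacts to the entire history `s 0, …, s (t-1)` while the other node repeats
its previous action. -/
theorem unbounded_recall_system_convergent
    (w : ℕ) (hw : 1 ≤ w) (s : ℕ → Fin 2 → XY)
    (σ : ℕ → Finset (Fin 2)) (hσ : ∀ t, (σ t).Nonempty) (hfair : Fair σ)
    (hdyn : ∀ t : ℕ, w ≤ t →
      ((1 : Fin 2) ∈ σ t → s t 1 = s (t - 1) 0) ∧
      ((1 : Fin 2) ∉ σ t → s t 1 = s (t - 1) 1) ∧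
      ((0 : Fin 2) ∈ σ t →
        ((∃ u : ℕ, u + 1 < t ∧ s u 1 = XY.x ∧ s (u + 1) 1 = XY.y) →
            s t 0 = XY.y) ∧
        (¬ (∃ u : ℕ, u + 1 < t ∧ s u 1 = XY.x ∧ s (u + 1) 1 = XY.y) →
            s t 0 = XY.x)) ∧
      ((0 : Fin 2) ∉ σ t → s t 0 = s (t - 1) 0)) :
    ∃ t0 : ℕ, (∀ t, t0 ≤ t → s t = s t0) ∧
      ((s t0 = fun _ => XY.x) ∨ (s t0 = fun _ => XY.y)) :=
  unbounded_recall_system_convergent_general w s σ hfair hdyn
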